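/- arXiv:2111.02310 — 4 statements merged into one kernel-verified Lean document; each statement's English description precedes it below -/
import Mathlib

section
/- Let n ≥ 1, θ_1,…,θ_n ∈ [0,1], and ψ^1,…,ψ^n ∈ ℝ. Define θ̂ = Σ_{i=1}^n θ_i/(n+θ_i) and φ^i = (n/(n+θ_i)) ψ^i + (θ_i/((n+θ_i)(1−θ̂))) Σ_{j=1}^n (n/(n+θ_j)) ψ^j. Then for every i, ψ^i = φ^i − (θ_i/n) Σ_{j≠i} φ^j. -/
/-!
Write `S = ∑ⱼ n/(n+θⱼ) ψⱼ`. Since `n/(n+θᵢ) + θᵢ/(n+θᵢ) = 1`, summing the formula gives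
`∑ⱼ φⱼ = S + θ̂ S/(1-θ̂) = S/(1-θ̂)`, so `φᵢ = n/(n+θᵢ) ψᵢ + θᵢ/(n+θᵢ) ∑ⱼ φⱼ`. This is the
`i`-th equation `ψᵢ = φᵢ - (θᵢ/n)(∑ⱼ φⱼ - φᵢ)` solved for `φᵢ`. Finally `θ̂ < 1` because each
term `θᵢ/(n+θᵢ)` is at most `1/(n+1)`.
-/

open Finset

section NashSystem

variable {ι : Type*} [Fintype ι]

theorem div_card_add_le_one_div_card_add_one {θ : ι → ℝ} (hθ : ∀ i, θ i ∈ Set.Icc (0 : ℝ) 1)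
    (i : ι) : θ i / (Fintype.card ι + θ i) ≤ 1 / (Fintype.card ι + 1) := by
  obtain ⟨h0, h1⟩ := hθ i
  have hcard : (1 : ℝ) ≤ Fintype.card ι := by
    exact_mod_cast Fintype.card_pos_iff.mpr ⟨i⟩
  rw [div_le_div_iff₀ (by linarith) (by linarith)]
  nlinarith

theorem sum_div_card_add_lt_one {θ : ι → ℝ} (hθ : ∀ i, θ i ∈ Set.Icc (0 : ℝ) 1) :
    ∑ i, θ i / (Fintype.card ι + θ i) < 1 := by
  have hcard : (0 : ℝ) ≤ Fintype.card ι := Nat.cast_nonneg _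
  calc ∑ i, θ i / (Fintype.card ι + θ i)
      ≤ ∑ _i : ι, 1 / ((Fintype.card ι : ℝ) + 1) :=
        sum_le_sum fun i _ => div_card_add_le_one_div_card_add_one hθ i
    _ = Fintype.card ι / (Fintype.card ι + 1) := by
        rw [sum_const, card_univ, nsmul_eq_mul, mul_one_div]
    _ < 1 := by rw [div_lt_one (by linarith)]; linarith

variable {N θhat : ℝ} {θ ψ φ : ι → ℝ}

theorem sum_eq_div_one_sub (hθhat : θhat = ∑ i, θ i / (N + θ i)) (hθhat_ne : θhat ≠ 1)
    (hφ : ∀ i, φ i = N / (N + θ i) * ψ i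
        + θ i / ((N + θ i) * (1 - θhat)) * ∑ j, N / (N + θ j) * ψ j) :
    ∑ i, φ i = (∑ j, N / (N + θ j) * ψ j) / (1 - θhat) := by
  set S := ∑ j, N / (N + θ j) * ψ j
  have hφ' : ∀ i, φ i = N / (N + θ i) * ψ i + θ i / (N + θ i) * (S / (1 - θhat)) := by
    intro i
    rw [hφ i, ← div_div]
    ring
  have hθhat_sub : 1 - θhat ≠ 0 := sub_ne_zero.mpr hθhat_ne.symm
  calc ∑ i, φ i = S + θhat * (S / (1 - θhat)) := by
        simp only [hφ', sum_add_distrib, ← sum_mul, ← hθhat]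
        rfl
    _ = S / (1 - θhat) := by
        field_simp
        ring

theorem eq_add_mul_sum (hθhat : θhat = ∑ i, θ i / (N + θ i)) (hθhat_ne : θhat ≠ 1)
    (hφ : ∀ i, φ i = N / (N + θ i) * ψ i
        + θ i / ((N + θ i) * (1 - θhat)) * ∑ j, N / (N + θ j) * ψ j) (i : ι) :
    φ i = N / (N + θ i) * ψ i + θ i / (N + θ i) * ∑ j, φ j := by
  rw [sum_eq_div_one_sub hθhat hθhat_ne hφ, hφ i, ← div_div]
  ring

theorem eq_sub_mul_sum_erase [DecidableEq ι] (hN : N ≠ 0) (i : ι) (hNθ : N + θ i ≠ 0)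
    (hφ : φ i = N / (N + θ i) * ψ i + θ i / (N + θ i) * ∑ j, φ j) :
    ψ i = φ i - θ i / N * ∑ j ∈ univ.erase i, φ j := by
  rw [sum_erase_eq_sub (mem_univ i), hφ]
  field_simp
  ring

end NashSystem

theorem nash_formula_solves_system_general (n : ℕ) (θ ψ : Fin n → ℝ)
    (hθ : ∀ i, θ i ∈ Set.Icc (0 : ℝ) 1)
    (θhat : ℝ) (hθhat : θhat = ∑ i, θ i / (n + θ i))
    (φ : Fin n → ℝ)
    (hφ : ∀ i, φ i = (n / (n + θ i)) * ψ i
        + (θ i / ((n + θ i) * (1 - θhat))) * ∑ j, (n / (n + θ j)) * ψ j) :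
    ∀ i, ψ i = φ i - (θ i / n) * ∑ j ∈ Finset.univ.erase i, φ j := by
  intro i
  have hn : (0 : ℝ) < n := by exact_mod_cast i.pos
  have hθhat_lt : θhat < 1 := by
    simpa only [hθhat, Fintype.card_fin] using sum_div_card_add_lt_one hθ
  have hnθ : (n : ℝ) + θ i ≠ 0 := by linarith [(hθ i).1]
  exact eq_sub_mul_sum_erase hn.ne' i hnθ (eq_add_mul_sum hθhat hθhat_lt.ne hφ i)

theorem nash_formula_solves_system (n : ℕ) (hn : 1 ≤ n) (θ ψ : Fin n → ℝ)
    (hθ : ∀ i, θ i ∈ Set.Icc (0 : ℝ) 1)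
    (θhat : ℝ) (hθhat : θhat = ∑ i, θ i / (n + θ i))
    (φ : Fin n → ℝ)
    (hφ : ∀ i, φ i = (n / (n + θ i)) * ψ i
        + (θ i / ((n + θ i) * (1 - θhat))) * ∑ j, (n / (n + θ j)) * ψ j) :
    ∀ i, ψ i = φ i - (θ i / n) * ∑ j ∈ Finset.univ.erase i, φ j :=
  nash_formula_solves_system_general n θ ψ hθ θhat hθhat φ hφ
end

section
/- Let n ≥ 1, θ_1,…,θ_n ∈ [0,1], and ψ^1,…,ψ^n ∈ ℝ. Then the linear system ψ^i = φ^i − (θ_i/n) Σ_{j≠i} φ^j (i = 1,…,n) has a unique solution (φ^1,…,φ^n) ∈ ℝ^n, given by φ^i = (n/(n+θ_i)) ψ^i + (θ_i/((n+θ_i)(1−θ̂))) Σ_{j=1}^n (n/(n+θ_j)) ψ^j, where θ̂ = Σ_{j=1}^n θ_j/(n+θ_j). -/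
/-! With `S = ∑ j, φ j` the `i`-th equation reads `(n + θ i) φ i = n ψ i + θ i S`, a rank-one
perturbation of a diagonal system. Summing over `i` gives `(1 - θhat) S = ∑ j, n ψ j / (n + θ j)`,
and `θhat < 1` since every `θ j / (n + θ j) ≤ 1 / (n + 1)`. -/

section RankOne

variable {ι K : Type*} [Fintype ι] [Field K]

theorem sum_eq_div_of_forall_eq_add_mul_sum {c b φ : ι → K} (hb : ∑ i, b i ≠ 1)
    (hφ : ∀ i, φ i = c i + b i * ∑ j, φ j) :
    ∑ i, φ i = (∑ i, c i) / (1 - ∑ i, b i) := by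
  have hsum : ∑ i, φ i = ∑ i, c i + (∑ i, b i) * ∑ i, φ i := by
    conv_lhs => rw [Finset.sum_congr rfl fun i _ => hφ i]
    rw [Finset.sum_add_distrib, Finset.sum_mul]
  rw [eq_div_iff (sub_ne_zero.2 hb.symm)]
  linear_combination hsum

theorem forall_eq_add_mul_sum_iff {c b φ : ι → K} (hb : ∑ i, b i ≠ 1) :
    (∀ i, φ i = c i + b i * ∑ j, φ j) ↔
      φ = fun i ↦ c i + b i / (1 - ∑ j, b j) * ∑ j, c j := by
  constructor
  · intro hφ
    funext i
    rw [hφ i, sum_eq_div_of_forall_eq_add_mul_sum hb hφ, div_mul_eq_mul_div, mul_div_assoc]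
  · rintro rfl i
    have h1 : 1 - ∑ j, b j ≠ 0 := sub_ne_zero.2 hb.symm
    simp only [Finset.sum_add_distrib, ← Finset.sum_mul, ← Finset.sum_div]
    field_simp
    ring

end RankOne

theorem eq_sub_div_mul_sub_iff {K : Type*} [Field K] {c t ψ x S : K} (hc : c ≠ 0)
    (hct : c + t ≠ 0) :
    ψ = x - t / c * (S - x) ↔ x = c / (c + t) * ψ + t / (c + t) * S := by
  field_simp
  constructor <;> intro h <;> linear_combination -h

theorem sum_div_nat_add_lt_one {n : ℕ} {θ : Fin n → ℝ} (hθ : ∀ i, θ i ∈ Set.Icc (0 : ℝ) 1) :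
    ∑ j, θ j / (n + θ j) < 1 := by
  have hle : ∀ j, θ j / (n + θ j) ≤ 1 / (n + 1) := fun j ↦ by
    obtain ⟨h0, h1⟩ := hθ j
    have hn : (0 : ℝ) < n := Nat.cast_pos.2 j.pos
    rw [div_le_div_iff₀ (by linarith) (by linarith)]
    nlinarith
  calc ∑ j, θ j / (n + θ j) ≤ ∑ _j : Fin n, 1 / ((n : ℝ) + 1) := Finset.sum_le_sum fun j _ ↦ hle j
    _ = n / (n + 1) := by simp [div_eq_mul_inv]
    _ < 1 := by rw [div_lt_one (by positivity)]; linarith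

theorem nash_system_unique_solution_general (n : ℕ) (θ ψ : Fin n → ℝ)
    (hθ : ∀ i, θ i ∈ Set.Icc (0 : ℝ) 1)
    (θhat : ℝ) (hθhat : θhat = ∑ j, θ j / (n + θ j)) :
    (∃! φ : Fin n → ℝ, ∀ i, ψ i = φ i - (θ i / n) * ∑ j ∈ Finset.univ.erase i, φ j) ∧
    (∀ φ : Fin n → ℝ,
      (∀ i, ψ i = φ i - (θ i / n) * ∑ j ∈ Finset.univ.erase i, φ j) →
      ∀ i, φ i = (n / (n + θ i)) * ψ i
        + (θ i / ((n + θ i) * (1 - θhat))) * ∑ j, (n / (n + θ j)) * ψ j) := by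
  have hsys : ∀ φ : Fin n → ℝ,
      (∀ i, ψ i = φ i - (θ i / n) * ∑ j ∈ Finset.univ.erase i, φ j) ↔
        φ = fun i ↦ n / (n + θ i) * ψ i
          + θ i / (n + θ i) / (1 - θhat) * ∑ j, n / (n + θ j) * ψ j := fun φ ↦ by
    rw [hθhat, ← forall_eq_add_mul_sum_iff (sum_div_nat_add_lt_one hθ).ne]
    refine forall_congr' fun i ↦ ?_
    have hn : (0 : ℝ) < n := Nat.cast_pos.2 i.pos
    rw [Finset.sum_erase_eq_sub (Finset.mem_univ i)]
    exact eq_sub_div_mul_sub_iff hn.ne' (by linarith [(hθ i).1])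
  refine ⟨⟨_, (hsys _).2 rfl, fun φ hφ ↦ (hsys φ).1 hφ⟩, fun φ hφ i ↦ ?_⟩
  simp only [(hsys φ).1 hφ, div_div]

theorem nash_system_unique_solution (n : ℕ) (hn : 1 ≤ n) (θ ψ : Fin n → ℝ)
    (hθ : ∀ i, θ i ∈ Set.Icc (0 : ℝ) 1)
    (θhat : ℝ) (hθhat : θhat = ∑ j, θ j / (n + θ j)) :
    (∃! φ : Fin n → ℝ, ∀ i, ψ i = φ i - (θ i / n) * ∑ j ∈ Finset.univ.erase i, φ j) ∧
    (∀ φ : Fin n → ℝ,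
      (∀ i, ψ i = φ i - (θ i / n) * ∑ j ∈ Finset.univ.erase i, φ j) →
      ∀ i, φ i = (n / (n + θ i)) * ψ i
        + (θ i / ((n + θ i) * (1 - θhat))) * ∑ j, (n / (n + θ j)) * ψ j) :=
  nash_system_unique_solution_general n θ ψ hθ θhat hθhat
end

section
/- Suppose (φ^1,…,φ^n) solves the system ψ^i = φ^i − (θ_i/n) Σ_{j≠i} φ^j with θ_i ∈ [0,1] and θ̂ = Σ_{i=1}^n θ_i/(n+θ_i). Then the aggregate φ̂ := Σ_{j=1}^n φ^j satisfies φ̂ = (1/(1−θ̂)) Σ_{i=1}^n (n/(n+θ_i)) ψ^i. -/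
/-!
Write `Φ = ∑ j, φ j`. Since `∑ j ≠ i, φ j = Φ - φ i`, the `i`-th equation reads
`ψ i = (1 + θ i / n) φ i - (θ i / n) Φ`, i.e. `n / (n + θ i) * ψ i = φ i - θ i / (n + θ i) * Φ`.
Summing over `i` gives `∑ i, n / (n + θ i) * ψ i = (1 - θ̂) Φ`, and `θ̂ < 1` because each
`θ i / (n + θ i)` is at most `1 / (n + 1)`.
-/

open Finset

lemma div_add_le_one_div_add_one {c t : ℝ} (hc : 0 ≤ c) (ht₀ : 0 ≤ t) (ht₁ : t ≤ 1) :
    t / (c + t) ≤ 1 / (c + 1) := by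
  rcases (add_nonneg hc ht₀).eq_or_lt with h | h
  · rw [← h, div_zero]
    positivity
  · rw [div_le_div_iff₀ h (by linarith)]
    nlinarith

lemma sum_div_add_lt_one {ι : Type*} [Fintype ι] {c : ℝ} (hc : (Fintype.card ι : ℝ) ≤ c)
    {θ : ι → ℝ} (hθ : ∀ i, θ i ∈ Set.Icc (0 : ℝ) 1) :
    ∑ i, θ i / (c + θ i) < 1 := by
  have hc₀ : 0 ≤ c := (Nat.cast_nonneg _).trans hc
  calc ∑ i, θ i / (c + θ i) ≤ ∑ _i : ι, 1 / (c + 1) :=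
        sum_le_sum fun i _ => div_add_le_one_div_add_one hc₀ (hθ i).1 (hθ i).2
    _ = Fintype.card ι / (c + 1) := by simp [div_eq_mul_inv]
    _ < 1 := by rw [div_lt_one (by linarith)]; linarith

lemma sum_div_add_mul_eq_one_sub_mul_sum {ι : Type*} [Fintype ι] [DecidableEq ι]
    {c : ℝ} (hc : c ≠ 0) {θ ψ φ : ι → ℝ} (hcθ : ∀ i, c + θ i ≠ 0)
    (hsys : ∀ i, ψ i = φ i - (θ i / c) * ∑ j ∈ univ.erase i, φ j) :
    ∑ i, c / (c + θ i) * ψ i = (1 - ∑ i, θ i / (c + θ i)) * ∑ j, φ j := by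
  have hterm : ∀ i, c / (c + θ i) * ψ i = φ i - θ i / (c + θ i) * ∑ j, φ j := by
    intro i
    rw [hsys i, sum_erase_eq_sub (mem_univ i)]
    have := hcθ i
    field_simp
    ring
  simp only [hterm, sum_sub_distrib, ← sum_mul]
  ring

theorem aggregate_formula (n : ℕ) (hn : 1 ≤ n) (θ ψ φ : Fin n → ℝ)
    (hθ : ∀ i, θ i ∈ Set.Icc (0 : ℝ) 1)
    (θhat : ℝ) (hθhat : θhat = ∑ i, θ i / (n + θ i))
    (hsys : ∀ i, ψ i = φ i - (θ i / n) * ∑ j ∈ Finset.univ.erase i, φ j) :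
    (∑ j, φ j) = (1 / (1 - θhat)) * ∑ i, (n / (n + θ i)) * ψ i := by
  have hn₀ : (0 : ℝ) < n := by exact_mod_cast hn
  have hlt : θhat < 1 := hθhat ▸ sum_div_add_lt_one (by simp) hθ
  rw [sum_div_add_mul_eq_one_sub_mul_sum hn₀.ne'
      (fun i => (add_pos_of_pos_of_nonneg hn₀ (hθ i).1).ne') hsys, ← hθhat, one_div,
    inv_mul_cancel_left₀ (sub_ne_zero.mpr hlt.ne')]
end

section
/- Fix n ≥ 1, i ∈ {1,…,n}, θ_j ∈ [0,1] for j ≠ i, and reals ψ^1,…,ψ^n with ψ^i > 0 and Σ_{j≠i} (n/(n+θ_j)) ψ^j > 0. Then the function θ_i ↦ (n/(n+θ_i)) ψ^i + (θ_i/((n+θ_i)(1−θ̂(θ_i)))) Σ_{j=1}^n (n/(n+θ_j)) ψ^j, where θ̂(θ_i) = θ_i/(n+θ_i) + Σ_{j≠i} θ_j/(n+θ_j), is strictly increasing on [0,1]. -/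
/-!
Writing `S = ∑_{j ≠ i} θ_j / (n + θ_j)` and `B = ∑_{j ≠ i} (n / (n + θ_j)) ψ^j`, and clearing the
common factor `n + t`, the strategy becomes the linear fractional function
`t ↦ (n ψ^i (1 - S) + B t) / (n (1 - S) - S t)`. Its derivative has the sign of
`n (1 - S) (B + S ψ^i)`, which is positive because `S ≤ (n - 1) / (n + 1) < 1`.
-/

open Finset Set

/-- Agent `i`'s equilibrium strategy as a function of her own weight `t`, where `a = ψ^i`,
`S = ∑_{j ≠ i} θ_j / (n + θ_j)` and `B = ∑_{j ≠ i} (n / (n + θ_j)) ψ^j`. -/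
noncomputable def nashStrategy (n a S B t : ℝ) : ℝ :=
  n / (n + t) * a + t / ((n + t) * (1 - (t / (n + t) + S))) * (n / (n + t) * a + B)

theorem nashStrategy_eq_div {n a S B t : ℝ} (ht : n + t ≠ 0) (hD : n * (1 - S) - S * t ≠ 0) :
    nashStrategy n a S B t = (n * a * (1 - S) + B * t) / (n * (1 - S) - S * t) := by
  have hden : (n + t) * (1 - (t / (n + t) + S)) = n * (1 - S) - S * t := by
    field_simp
    ring
  rw [nashStrategy, hden, eq_div_iff hD, add_mul, mul_right_comm (t / _), div_mul_cancel₀ _ hD]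
  field_simp
  ring

theorem strictMonoOn_linear_div_linear {a b c d : ℝ} (h : 0 < a * d + b * c) :
    StrictMonoOn (fun t => (a + b * t) / (c - d * t)) {t | d * t < c} := by
  intro x hx y hy hxy
  have hx : 0 < c - d * x := sub_pos.2 hx
  have hy : 0 < c - d * y := sub_pos.2 hy
  rw [div_lt_div_iff₀ hx hy]
  nlinarith [mul_pos (sub_pos.2 hxy) h]

theorem div_add_le_one_div_add_one_s5 {m x : ℝ} (hm : 0 < m) (hx : x ∈ Icc (0 : ℝ) 1) :
    x / (m + x) ≤ 1 / (m + 1) := by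
  rw [div_le_div_iff₀ (by linarith [hx.1]) (by linarith)]
  nlinarith [hx.2]

theorem sum_div_add_le_card_div {ι : Type*} (s : Finset ι) {m : ℝ} (hm : 0 < m) {x : ι → ℝ}
    (hx : ∀ j ∈ s, x j ∈ Icc (0 : ℝ) 1) :
    ∑ j ∈ s, x j / (m + x j) ≤ #s / (m + 1) := by
  calc ∑ j ∈ s, x j / (m + x j) ≤ ∑ _j ∈ s, 1 / (m + 1) :=
        sum_le_sum fun j hj => div_add_le_one_div_add_one_s5 hm (hx j hj)
    _ = #s / (m + 1) := by rw [sum_const, nsmul_eq_mul, mul_one_div]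

theorem nash_strategy_monotone_in_theta_general (n : ℕ) (i : Fin n)
    (θ ψ : Fin n → ℝ) (hθ : ∀ j, j ≠ i → θ j ∈ Set.Icc (0 : ℝ) 1)
    (hψi : 0 < ψ i)
    (hsum : 0 < ∑ j ∈ Finset.univ.erase i, (n / (n + θ j)) * ψ j) :
    StrictMonoOn (fun t : ℝ =>
      (n / (n + t)) * ψ i
        + (t / ((n + t) * (1 - (t / (n + t) + ∑ j ∈ Finset.univ.erase i, θ j / (n + θ j)))))
          * ((n / (n + t)) * ψ i + ∑ j ∈ Finset.univ.erase i, (n / (n + θ j)) * ψ j))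
      (Set.Icc 0 1) := by
  set S := ∑ j ∈ univ.erase i, θ j / (n + θ j)
  set B := ∑ j ∈ univ.erase i, (n / (n + θ j)) * ψ j
  have hn : (0 : ℝ) < n := Nat.cast_pos.2 i.pos
  have hθ' : ∀ j ∈ univ.erase i, θ j ∈ Icc (0 : ℝ) 1 := fun j hj => hθ j (ne_of_mem_erase hj)
  have hS0 : 0 ≤ S := sum_nonneg fun j hj => div_nonneg (hθ' j hj).1 (by linarith [(hθ' j hj).1])
  have hS : S * (n + 1) ≤ n - 1 := by
    have h := sum_div_add_le_card_div _ hn hθ'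
    rw [card_erase_of_mem (mem_univ i), card_univ, Fintype.card_fin,
      Nat.cast_sub (Nat.one_le_iff_ne_zero.2 i.pos.ne'), Nat.cast_one,
      le_div_iff₀ (by linarith)] at h
    exact h
  have hD : ∀ t ∈ Icc (0 : ℝ) 1, S * t < n * (1 - S) := fun t ht => by
    nlinarith [mul_le_mul_of_nonneg_left ht.2 hS0]
  refine ((strictMonoOn_linear_div_linear (a := n * ψ i * (1 - S)) (b := B) ?_).mono hD).congr
    fun t ht => (nashStrategy_eq_div (by linarith [ht.1]) (by linarith [hD t ht])).symm
  nlinarith [mul_nonneg (mul_nonneg hn.le hψi.le) hS0, mul_pos hsum hn]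

theorem nash_strategy_monotone_in_theta (n : ℕ) (hn : 1 ≤ n) (i : Fin n)
    (θ ψ : Fin n → ℝ) (hθ : ∀ j, j ≠ i → θ j ∈ Set.Icc (0 : ℝ) 1)
    (hψi : 0 < ψ i)
    (hsum : 0 < ∑ j ∈ Finset.univ.erase i, (n / (n + θ j)) * ψ j) :
    StrictMonoOn (fun t : ℝ =>
      (n / (n + t)) * ψ i
        + (t / ((n + t) * (1 - (t / (n + t) + ∑ j ∈ Finset.univ.erase i, θ j / (n + θ j)))))
          * ((n / (n + t)) * ψ i + ∑ j ∈ Finset.univ.erase i, (n / (n + θ j)) * ψ j))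
      (Set.Icc 0 1) :=
  nash_strategy_monotone_in_theta_general n i θ ψ hθ hψi hsum
end
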